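/- Let κ ≥ 1/2 and π ∈ ℝ^{N−1} be such that the pair (s, w) given by s := λ₁ − κ⁻¹ xᵀr and w := κx + Xπ solves the system (∗). Then |κ − 1| ≤ |ρ| + 4 λ̂⁻² ‖r‖² and ‖π‖ ≤ 2 λ̂⁻¹ ‖r‖; in particular there exists a constant C > 0 (independent of S, r, ρ) with |κ − 1| ≤ C(|ρ| + λ̂⁻²‖r‖²) and ‖π‖ ≤ C λ̂⁻¹‖r‖. -/
import Mathlib
open Matrix

lemma dotProduct_sum' {N : ℕ} {ι : Type*} (t : Finset ι) (v : Fin N → ℝ) (f : ι → Fin N → ℝ) :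
    v ⬝ᵥ (∑ j ∈ t, f j) = ∑ j ∈ t, v ⬝ᵥ f j := by
  simp only [dotProduct, Finset.sum_apply, Finset.mul_sum]
  exact Finset.sum_comm

lemma sum_dotProduct' {N : ℕ} {ι : Type*} (t : Finset ι) (v : Fin N → ℝ) (f : ι → Fin N → ℝ) :
    (∑ j ∈ t, f j) ⬝ᵥ v = ∑ j ∈ t, f j ⬝ᵥ v := by
  simp only [dotProduct, Finset.sum_apply, Finset.sum_mul]
  exact Finset.sum_comm

lemma mulVec_sum' {N M : ℕ} {ι : Type*} (t : Finset ι) (A : Matrix (Fin N) (Fin M) ℝ)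
    (f : ι → Fin M → ℝ) : A *ᵥ (∑ j ∈ t, f j) = ∑ j ∈ t, A *ᵥ f j := by
  simp only [← Matrix.mulVecLin_apply]
  exact map_sum A.mulVecLin f t

lemma bessel' {N : ℕ} {ι : Type*} [Fintype ι] [DecidableEq ι] (v : ι → Fin N → ℝ)
    (hv : ∀ j k, v j ⬝ᵥ v k = if j = k then (1 : ℝ) else 0) (r : Fin N → ℝ) :
    ∑ j, (v j ⬝ᵥ r) ^ 2 ≤ r ⬝ᵥ r := by
  set t : Fin N → ℝ := ∑ j, (v j ⬝ᵥ r) • v j with ht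
  have h1 : r ⬝ᵥ t = ∑ j, (v j ⬝ᵥ r) ^ 2 := by
    rw [ht, dotProduct_sum']
    refine Finset.sum_congr rfl fun j _ => ?_
    rw [dotProduct_smul, dotProduct_comm, smul_eq_mul, sq]
  have h2 : t ⬝ᵥ r = ∑ j, (v j ⬝ᵥ r) ^ 2 := by
    rw [ht, sum_dotProduct']
    refine Finset.sum_congr rfl fun j _ => ?_
    rw [smul_dotProduct, smul_eq_mul, sq]
  have h3 : t ⬝ᵥ t = ∑ j, (v j ⬝ᵥ r) ^ 2 := by
    rw [ht, sum_dotProduct']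
    refine Finset.sum_congr rfl fun j _ => ?_
    rw [smul_dotProduct, smul_eq_mul, dotProduct_sum']
    simp only [dotProduct_smul, hv, smul_eq_mul, mul_ite, mul_one, mul_zero]
    rw [Finset.sum_ite_eq Finset.univ j fun k => v k ⬝ᵥ r]
    simp [sq]
  have h0 : 0 ≤ (r - t) ⬝ᵥ (r - t) := by
    apply Finset.sum_nonneg; intro i _; exact mul_self_nonneg _
  rw [sub_dotProduct, dotProduct_sub, dotProduct_sub, h1, h2, h3] at h0
  linarith

/-- Lemma 5.6 (iii) of Hakula–Laaksonen: quantitative bounds on `κ` and `π` for the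
solution `(s, w)` of the perturbed eigenvalue system. -/
theorem stmt2 (N : ℕ) (hN : 2 ≤ N)
    (S : Matrix (Fin N) (Fin N) ℝ)
    (x : Fin N → ℝ) (X : Matrix (Fin N) (Fin (N - 1)) ℝ)
    (lam1 : ℝ) (lam2 : Fin (N - 1) → ℝ)
    (hSx : S *ᵥ x = lam1 • x)
    (hSX : ∀ j, S *ᵥ (fun i => X i j) = lam2 j • (fun i => X i j))
    (hxx : x ⬝ᵥ x = 1)
    (hxX : ∀ j, x ⬝ᵥ (fun i => X i j) = 0)
    (hXX : ∀ j k, (fun i => X i j) ⬝ᵥ (fun i => X i k) = if j = k then (1 : ℝ) else 0)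
    (hord : Antitone lam2)
    (hsep : lam2 ⟨0, by omega⟩ < lam1)
    (lamhat : ℝ) (hlamhat : lamhat = lam1 - lam2 ⟨0, by omega⟩)
    (ρ : ℝ) (r : Fin N → ℝ)
    (hρ : |ρ| ≤ 1 / 2)
    (hr : Real.sqrt (r ⬝ᵥ r) ≤ lamhat / 8)
    (κ : ℝ) (π : Fin (N - 1) → ℝ) (hκ : 1 / 2 ≤ κ)
    (s : ℝ) (hs : s = lam1 - κ⁻¹ * (x ⬝ᵥ r))
    (w : Fin N → ℝ) (hw : w = κ • x + X *ᵥ π)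
    (hsolve1 : S *ᵥ w = s • w + r)
    (hsolve2 : w ⬝ᵥ w = 1 + ρ) :
    |κ - 1| ≤ |ρ| + 4 * (lamhat ^ 2)⁻¹ * (r ⬝ᵥ r) ∧
    Real.sqrt (π ⬝ᵥ π) ≤ 2 * lamhat⁻¹ * Real.sqrt (r ⬝ᵥ r) ∧
    ∃ C : ℝ, 0 < C ∧
      |κ - 1| ≤ C * (|ρ| + (lamhat ^ 2)⁻¹ * (r ⬝ᵥ r)) ∧
      Real.sqrt (π ⬝ᵥ π) ≤ C * (lamhat⁻¹ * Real.sqrt (r ⬝ᵥ r)) := by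
  have hlam : 0 < lamhat := by rw [hlamhat]; linarith
  have hκ0 : 0 < κ := by linarith
  have hrr : 0 ≤ r ⬝ᵥ r := Finset.sum_nonneg fun i _ => mul_self_nonneg _
  have hππ0 : 0 ≤ π ⬝ᵥ π := Finset.sum_nonneg fun i _ => mul_self_nonneg _
  have hκinv : κ⁻¹ ≤ 2 := by
    rw [show (2:ℝ) = (1/2:ℝ)⁻¹ by norm_num]
    exact inv_anti₀ (by norm_num) hκ
  -- |x ⬝ᵥ r| ≤ √(r⬝r)
  have hxr2 : (x ⬝ᵥ r) ^ 2 ≤ r ⬝ᵥ r := by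
    have := bessel' (fun _ : Unit => x) (fun j k => by simp [hxx]) r
    simpa using this
  have hxr : |x ⬝ᵥ r| ≤ Real.sqrt (r ⬝ᵥ r) := by
    rw [← Real.sqrt_sq_eq_abs]
    exact Real.sqrt_le_sqrt hxr2
  -- bound on |lam1 - s|
  have hs1 : |lam1 - s| ≤ lamhat / 4 := by
    rw [hs]
    have : lam1 - (lam1 - κ⁻¹ * (x ⬝ᵥ r)) = κ⁻¹ * (x ⬝ᵥ r) := by ring
    rw [this, abs_mul, abs_of_nonneg (by positivity : (0:ℝ) ≤ κ⁻¹)]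
    calc κ⁻¹ * |x ⬝ᵥ r| ≤ 2 * (lamhat / 8) := by
          apply mul_le_mul hκinv (le_trans hxr hr) (abs_nonneg _) (by norm_num)
      _ = lamhat / 4 := by ring
  -- expansion of X *ᵥ π
  have hXπ : X *ᵥ π = ∑ j, π j • (fun i => X i j) := by
    ext i
    simp [mulVec, dotProduct, Finset.sum_apply, mul_comm]
  have hxt : x ⬝ᵥ (∑ j, π j • (fun i => X i j)) = 0 := by
    rw [dotProduct_sum']
    simp [dotProduct_smul, hxX]
  have htx : (∑ j, π j • (fun i => X i j)) ⬝ᵥ x = 0 := by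
    rw [dotProduct_comm]; exact hxt
  have htt : (∑ j, π j • (fun i => X i j)) ⬝ᵥ (∑ j, π j • (fun i => X i j)) = π ⬝ᵥ π := by
    rw [sum_dotProduct']
    refine Finset.sum_congr rfl fun j _ => ?_
    rw [smul_dotProduct, smul_eq_mul, dotProduct_sum']
    simp only [dotProduct_smul, hXX, smul_eq_mul, mul_ite, mul_one, mul_zero]
    rw [Finset.sum_ite_eq Finset.univ j π]
    simp
  -- w ⬝ w = κ² + π⬝π
  have hww : κ ^ 2 + π ⬝ᵥ π = 1 + ρ := by
    rw [← hsolve2, hw, hXπ]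
    simp only [add_dotProduct, dotProduct_add, smul_dotProduct, dotProduct_smul]
    rw [hxx, hxt, htx, htt]
    simp only [smul_eq_mul]
    ring
  -- key scalar equation
  have hcw : ∀ k, (fun i => X i k) ⬝ᵥ w = π k := by
    intro k
    have hkx : (fun i => X i k) ⬝ᵥ x = 0 := by rw [dotProduct_comm]; exact hxX k
    rw [hw, hXπ, dotProduct_add, dotProduct_smul, hkx, dotProduct_sum']
    simp only [dotProduct_smul, hXX, smul_eq_mul, mul_ite, mul_one, mul_zero]
    rw [Finset.sum_ite_eq Finset.univ k π]
    simp
  have hSw : S *ᵥ w = κ • (lam1 • x) + ∑ j, π j • (lam2 j • (fun i => X i j)) := by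
    rw [hw, mulVec_add, mulVec_smul, hSx, hXπ, mulVec_sum']
    congr 1
    refine Finset.sum_congr rfl fun j _ => ?_
    rw [mulVec_smul, hSX j]
  have hkey : ∀ k, (lam2 k - s) * π k = (fun i => X i k) ⬝ᵥ r := by
    intro k
    have hkx : (fun i => X i k) ⬝ᵥ x = 0 := by rw [dotProduct_comm]; exact hxX k
    have h := congrArg (fun v => (fun i => X i k) ⬝ᵥ v) hsolve1
    rw [hSw, dotProduct_add, dotProduct_smul, dotProduct_smul, hkx, dotProduct_add,
      dotProduct_smul, hcw k, dotProduct_sum'] at h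
    simp only [dotProduct_smul, hXX, smul_eq_mul, mul_ite, mul_one, mul_zero] at h
    rw [Finset.sum_ite_eq Finset.univ k (fun j => π j * lam2 j)] at h
    simp only [Finset.mem_univ, if_true, smul_eq_mul, mul_zero, zero_add] at h
    linarith [h]
  -- separation bound
  have hlk : ∀ k, lamhat / 2 ≤ |lam2 k - s| := by
    intro k
    have h1 : lam2 k ≤ lam2 ⟨0, by omega⟩ := hord (Fin.le_def.mpr (Nat.zero_le _))
    have h2 : lamhat / 2 ≤ s - lam2 k := by
      have := abs_le.mp hs1
      rw [hlamhat] at *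
      linarith [this.1, this.2]
    calc lamhat / 2 ≤ s - lam2 k := h2
      _ ≤ |s - lam2 k| := le_abs_self _
      _ = |lam2 k - s| := (abs_sub_comm _ _)
  -- π ⬝ π bound
  have hbes : ∑ j, ((fun i => X i j) ⬝ᵥ r) ^ 2 ≤ r ⬝ᵥ r := bessel' (fun j i => X i j) hXX r
  have hsum : (lamhat / 2) ^ 2 * (π ⬝ᵥ π) ≤ r ⬝ᵥ r := by
    calc (lamhat / 2) ^ 2 * (π ⬝ᵥ π) = ∑ k, (lamhat / 2) ^ 2 * (π k) ^ 2 := by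
          rw [dotProduct, Finset.mul_sum]
          exact Finset.sum_congr rfl fun k _ => by ring
      _ ≤ ∑ k, ((lam2 k - s) * π k) ^ 2 := by
          refine Finset.sum_le_sum fun k _ => ?_
          have h1 : (lamhat / 2) ^ 2 ≤ (lam2 k - s) ^ 2 := by
            rw [← sq_abs (lam2 k - s)]
            exact pow_le_pow_left₀ (by linarith) (hlk k) 2
          have h2 : (0:ℝ) ≤ (π k) ^ 2 := sq_nonneg _
          calc (lamhat / 2) ^ 2 * (π k) ^ 2 ≤ (lam2 k - s) ^ 2 * (π k) ^ 2 :=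
                mul_le_mul_of_nonneg_right h1 h2
            _ = ((lam2 k - s) * π k) ^ 2 := by ring
      _ = ∑ k, ((fun i => X i k) ⬝ᵥ r) ^ 2 := Finset.sum_congr rfl fun k _ => by rw [hkey k]
      _ ≤ r ⬝ᵥ r := hbes
  have hππ : π ⬝ᵥ π ≤ 4 * (lamhat ^ 2)⁻¹ * (r ⬝ᵥ r) := by
    have hpos : (0:ℝ) < lamhat ^ 2 := by positivity
    have h := mul_le_mul_of_nonneg_left hsum (by positivity : (0:ℝ) ≤ 4 * (lamhat ^ 2)⁻¹)
    calc π ⬝ᵥ π = 4 * (lamhat ^ 2)⁻¹ * ((lamhat / 2) ^ 2 * (π ⬝ᵥ π)) := by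
          field_simp; ring
      _ ≤ 4 * (lamhat ^ 2)⁻¹ * (r ⬝ᵥ r) := h
  -- sqrt bound for π
  have hπsqrt : Real.sqrt (π ⬝ᵥ π) ≤ 2 * lamhat⁻¹ * Real.sqrt (r ⬝ᵥ r) := by
    have h1 : π ⬝ᵥ π ≤ (2 * lamhat⁻¹) ^ 2 * (r ⬝ᵥ r) := by
      have : (2 * lamhat⁻¹) ^ 2 = 4 * (lamhat ^ 2)⁻¹ := by rw [← inv_pow]; ring
      rw [this]; exact hππ
    calc Real.sqrt (π ⬝ᵥ π) ≤ Real.sqrt ((2 * lamhat⁻¹) ^ 2 * (r ⬝ᵥ r)) :=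
          Real.sqrt_le_sqrt h1
      _ = 2 * lamhat⁻¹ * Real.sqrt (r ⬝ᵥ r) := by
          rw [Real.sqrt_mul (sq_nonneg _), Real.sqrt_sq (by positivity)]
  -- κ bound
  have hκ1 : |κ - 1| ≤ |ρ| + 4 * (lamhat ^ 2)⁻¹ * (r ⬝ᵥ r) := by
    have h1 : κ ^ 2 - 1 = ρ - π ⬝ᵥ π := by linarith
    have h2 : |κ - 1| ≤ |κ ^ 2 - 1| := by
      have he : κ ^ 2 - 1 = (κ - 1) * (κ + 1) := by ring
      rw [he, abs_mul, abs_of_pos (show (0:ℝ) < κ + 1 by linarith)]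
      nlinarith [abs_nonneg (κ - 1)]
    have h3 : |κ ^ 2 - 1| ≤ |ρ| + π ⬝ᵥ π := by
      rw [h1]
      calc |ρ - π ⬝ᵥ π| ≤ |ρ| + |π ⬝ᵥ π| := abs_sub _ _
        _ = |ρ| + π ⬝ᵥ π := by rw [abs_of_nonneg hππ0]
    linarith
  refine ⟨hκ1, hπsqrt, 4, by norm_num, ?_, ?_⟩
  · have : (0:ℝ) ≤ (lamhat ^ 2)⁻¹ * (r ⬝ᵥ r) := by positivity
    have hρ0 : (0:ℝ) ≤ |ρ| := abs_nonneg _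
    linarith
  · have : (0:ℝ) ≤ lamhat⁻¹ * Real.sqrt (r ⬝ᵥ r) := by positivity
    linarith
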